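/- Let X and A be countable nonempty sets, let P : X × A × X → [0,1] with ∑_{x'} P(x, a, x') = 1 for all (x, a), let π : X × A → [0,1] with ∑_{a'} π(x', a') = 1 for all x', let r : X × A → ℝ, and let γ ∈ [0,1). For value distributions Z : X × A → (probability measures on ℝ), define the distributional Bellman operator (T^π Z)(x, a) = ∑_{x'} ∑_{a'} P(x, a, x')·π(x', a') · f_{x,a}#(Z(x', a')), where f_{x,a}#(μ) denotes the pushforward of μ under the map z ↦ r(x, a) + γ·z. Then for every p ∈ [1, ∞) and any two value distributions Z_1, Z_2 whose state-action distributions all have finite p-th moments, d̄_p(T^π Z_1, T^π Z_2) ≤ γ · d̄_p(Z_1, Z_2), where d̄_p(Z_1, Z_2) = sup_{x, a} W_p(Z_1(x, a), Z_2(x, a)); that is, T^π is a γ-contraction in the maximal p-Wasserstein metric. -/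

import Mathlib

open MeasureTheory Set
open scoped ENNReal

/-- The CDF of a measure on ℝ: `F(y) = μ((-∞, y])`. -/
noncomputable def cdfFn (μ : Measure ℝ) (y : ℝ) : ℝ := (μ (Iic y)).toReal

/-- The quantile function (generalized inverse CDF): `F⁻¹(ω) = inf {y | ω ≤ F(y)}`. -/
noncomputable def quantileFn (μ : Measure ℝ) (ω : ℝ) : ℝ := sInf {y : ℝ | ω ≤ cdfFn μ y}

/-- The p-Wasserstein distance `W_p(μ, ν) = (∫_0^1 |F_μ⁻¹(ω) - F_ν⁻¹(ω)|^p dω)^{1/p}`, valued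
in `ℝ≥0∞` so that suprema over infinitely many state-action pairs are well-defined. -/
noncomputable def WpE (p : ℝ) (μ ν : Measure ℝ) : ℝ≥0∞ :=
  (∫⁻ ω in Set.Ioo (0:ℝ) 1, ENNReal.ofReal (|quantileFn μ ω - quantileFn ν ω| ^ p)) ^ (1 / p)

/-- The distributional Bellman operator: `(T^π Z)(x,a)` is the mixture over next state-action
pairs `(x',a')`, weighted by `P(x,a,x') π(x',a')`, of the pushforward of `Z(x',a')` under
`z ↦ r(x,a) + γ z`. -/
noncomputable def distBellman {X A : Type*} [Countable X] [Countable A]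
    (P : X → A → X → ℝ) (π : X → A → ℝ) (r : X → A → ℝ) (γ : ℝ)
    (Z : X × A → Measure ℝ) : X × A → Measure ℝ :=
  fun q => Measure.sum fun x' : X => Measure.sum fun a' : A =>
    ENNReal.ofReal (P q.1 q.2 x' * π x' a') •
      Measure.map (fun z : ℝ => r q.1 q.2 + γ * z) (Z (x', a'))

/-!
For `p ≥ 1` there is a measure `ρ` on pairs of thresholds with
`|a - b| ^ p = ∫ straddle a b s t dρ(s, t)`, where `straddle a b s t` says that one of `a, b` is
`≤ s` and the other is `> t`: take `ρ = p (p - 1) (t - s) ^ (p - 2) 1_{s < t} ds dt` for `p > 1` and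
the diagonal `s = t` for `p = 1`. Substituting the quantile functions of `μ` and `ν` and integrating
over `ω ∈ (0, 1)` gives
`W_p(μ, ν) ^ p = ∫ [(F_μ(s) - F_ν(t))₊ + (F_ν(s) - F_μ(t))₊] dρ(s, t)`,
whose integrand is subadditive under countable mixtures of `(μ, ν)`; hence `W_p ^ p` is jointly
convex. Quantile functions commute with the monotone map `z ↦ r + γ z`, so this pushforward scales
`W_p` by `γ`, and `(T^π Z)(x, a)` is the mixture of such pushforwards with weights
`P(x, a, x') π(x', a')` summing to one.
-/

open Filter ProbabilityTheory

section Quantile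

variable (μ : Measure ℝ) [IsProbabilityMeasure μ] {ω : ℝ}

lemma cdfFn_eq_cdf : cdfFn μ = cdf μ := by
  ext y
  rw [cdfFn, cdf_eq_real, measureReal_def]

lemma bddBelow_setOf_le_cdfFn (h0 : 0 < ω) : BddBelow {y | ω ≤ cdfFn μ y} := by
  obtain ⟨y₀, hy₀⟩ := ((tendsto_cdf_atBot μ).eventually (gt_mem_nhds h0)).exists
  refine ⟨y₀, fun y (hy : ω ≤ cdfFn μ y) => le_of_not_gt fun hlt => ?_⟩
  rw [cdfFn_eq_cdf] at hy
  exact (hy.trans ((cdf μ).mono hlt.le)).not_gt hy₀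

lemma nonempty_setOf_le_cdfFn (h1 : ω < 1) : {y | ω ≤ cdfFn μ y}.Nonempty := by
  obtain ⟨y, hy⟩ := ((tendsto_cdf_atTop μ).eventually (lt_mem_nhds h1)).exists
  exact ⟨y, show ω ≤ cdfFn μ y by rw [cdfFn_eq_cdf]; exact hy.le⟩

lemma le_cdfFn_quantileFn (h0 : 0 < ω) (h1 : ω < 1) : ω ≤ cdfFn μ (quantileFn μ ω) := by
  have hbdd := bddBelow_setOf_le_cdfFn μ h0
  have hne := nonempty_setOf_le_cdfFn μ h1
  rw [cdfFn_eq_cdf] at hbdd hne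
  rw [quantileFn, cdfFn_eq_cdf]
  refine ge_of_tendsto (((cdf μ).right_continuous _).mono Ioi_subset_Ici_self) ?_
  filter_upwards [self_mem_nhdsWithin] with y hy
  obtain ⟨z, hz, hzy⟩ := (csInf_lt_iff hbdd hne).1 hy
  exact hz.trans ((cdf μ).mono hzy.le)

lemma quantileFn_le_iff (h0 : 0 < ω) (h1 : ω < 1) (s : ℝ) :
    quantileFn μ ω ≤ s ↔ ENNReal.ofReal ω ≤ μ (Iic s) := by
  rw [ENNReal.ofReal_le_iff_le_toReal (measure_ne_top μ _), ← cdfFn]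
  refine ⟨fun h => (le_cdfFn_quantileFn μ h0 h1).trans ?_,
    fun h => csInf_le (bddBelow_setOf_le_cdfFn μ h0) h⟩
  rw [cdfFn_eq_cdf]
  exact (cdf μ).mono h

lemma lt_quantileFn_iff (h0 : 0 < ω) (h1 : ω < 1) (t : ℝ) :
    t < quantileFn μ ω ↔ μ (Iic t) < ENNReal.ofReal ω := by
  rw [← not_le, quantileFn_le_iff μ h0 h1, not_le]

lemma quantileFn_map {f : ℝ → ℝ} (hf : Monotone f) (hfc : Continuous f) (h0 : 0 < ω)
    (h1 : ω < 1) : quantileFn (μ.map f) ω = f (quantileFn μ ω) := by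
  have := Measure.isProbabilityMeasure_map (μ := μ) hfc.measurable.aemeasurable
  refine eq_of_forall_ge_iff fun y => ?_
  rw [quantileFn_le_iff _ h0 h1, Measure.map_apply hfc.measurable measurableSet_Iic]
  refine ⟨fun h => ?_, fun h => ((quantileFn_le_iff μ h0 h1 _).1 le_rfl).trans
    (measure_mono fun x (hx : x ≤ _) => (hf hx).trans h)⟩
  by_contra! hy
  obtain ⟨z, hzf, hzq⟩ : ∃ z, y < f z ∧ z < quantileFn μ ω :=
    ((((hfc.tendsto _).eventually (lt_mem_nhds hy)).filter_mono nhdsWithin_le_nhds).and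
      (self_mem_nhdsWithin (s := Iio (quantileFn μ ω)))).exists
  have hsub : f ⁻¹' Iic y ⊆ Iic z := fun x (hx : f x ≤ y) => (hf.reflect_lt (hx.trans_lt hzf)).le
  exact (h.trans (measure_mono hsub)).not_gt ((lt_quantileFn_iff μ h0 h1 z).1 hzq)

end Quantile

section Calculus

lemma setLIntegral_Ioo_ofReal_deriv {f f' : ℝ → ℝ} {a b : ℝ} (hab : a ≤ b)
    (hcont : ContinuousOn f (Icc a b)) (hderiv : ∀ x ∈ Ioo a b, HasDerivAt f (f' x) x)
    (hpos : ∀ x ∈ Ioo a b, 0 ≤ f' x) :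
    ∫⁻ x in Ioo a b, ENNReal.ofReal (f' x) = ENNReal.ofReal (f b - f a) := by
  have hint := intervalIntegral.integrableOn_deriv_of_nonneg hcont hderiv hpos
  rw [← ofReal_integral_eq_lintegral_ofReal (hint.mono_set Ioo_subset_Ioc_self)
      ((ae_restrict_iff' measurableSet_Ioo).2 (Eventually.of_forall hpos)),
    ← integral_Ioc_eq_integral_Ioo, ← intervalIntegral.integral_of_le hab,
    intervalIntegral.integral_eq_sub_of_hasDerivAt_of_le hab hcont hderiv
      ((intervalIntegrable_iff_integrableOn_Ioc_of_le hab).2 hint)]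

lemma setLIntegral_Ioo_rpow_sub_left {q : ℝ} (hq : 0 < q) (a b : ℝ) :
    ∫⁻ t in Ioo a b, ENNReal.ofReal (q * (t - a) ^ (q - 1)) = ENNReal.ofReal (b - a) ^ q := by
  rcases le_total b a with hba | hab
  · rw [Ioo_eq_empty (not_lt.2 hba), Measure.restrict_empty, lintegral_zero_measure,
      ENNReal.ofReal_of_nonpos (sub_nonpos.2 hba), ENNReal.zero_rpow_of_pos hq]
  rw [setLIntegral_Ioo_ofReal_deriv (f := fun t => (t - a) ^ q) hab
    ((continuous_id.sub continuous_const).rpow_const fun _ => Or.inr hq.le).continuousOn]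
  · simp [Real.zero_rpow hq.ne', ENNReal.ofReal_rpow_of_nonneg (sub_nonneg.2 hab) hq.le]
  · intro t ht
    simpa using ((hasDerivAt_id t).sub_const a).rpow_const (p := q)
      (Or.inl (sub_pos.2 ht.1).ne')
  · exact fun t ht => mul_nonneg hq.le (Real.rpow_nonneg (sub_pos.2 ht.1).le _)

lemma setLIntegral_Ioo_rpow_sub_right {q : ℝ} (hq : 0 < q) (a b : ℝ) :
    ∫⁻ t in Ioo a b, ENNReal.ofReal (q * (b - t) ^ (q - 1)) = ENNReal.ofReal (b - a) ^ q := by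
  rcases le_total b a with hba | hab
  · rw [Ioo_eq_empty (not_lt.2 hba), Measure.restrict_empty, lintegral_zero_measure,
      ENNReal.ofReal_of_nonpos (sub_nonpos.2 hba), ENNReal.zero_rpow_of_pos hq]
  rw [setLIntegral_Ioo_ofReal_deriv (f := fun t => -(b - t) ^ q) hab
    ((continuous_const.sub continuous_id).rpow_const fun _ => Or.inr hq.le).neg.continuousOn]
  · simp [Real.zero_rpow hq.ne', ENNReal.ofReal_rpow_of_nonneg (sub_nonneg.2 hab) hq.le]
  · intro t ht
    simpa using (((hasDerivAt_id t).const_sub b).rpow_const (p := q)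
      (Or.inl (sub_pos.2 ht.2).ne')).fun_neg
  · exact fun t ht => mul_nonneg hq.le (Real.rpow_nonneg (sub_pos.2 ht.2).le _)

end Calculus

section Straddle

noncomputable def straddle (a b s t : ℝ) : ℝ≥0∞ :=
  (if a ≤ s ∧ t < b then 1 else 0) + (if b ≤ s ∧ t < a then 1 else 0)

lemma measurable_ite_le_lt (a b : ℝ) :
    Measurable fun x : ℝ × ℝ => if a ≤ x.1 ∧ x.2 < b then (1 : ℝ≥0∞) else 0 :=
  Measurable.ite ((measurableSet_le measurable_const measurable_fst).inter
    (measurableSet_lt measurable_snd measurable_const)) measurable_const measurable_const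

lemma measurable_straddle (a b : ℝ) : Measurable fun x : ℝ × ℝ => straddle a b x.1 x.2 :=
  (measurable_ite_le_lt a b).fun_add (measurable_ite_le_lt b a)

lemma ofReal_abs_sub_rpow {p : ℝ} (hp : 0 < p) (a b : ℝ) :
    ENNReal.ofReal (|a - b| ^ p) = ENNReal.ofReal (b - a) ^ p + ENNReal.ofReal (a - b) ^ p := by
  rcases le_total a b with h | h
  · rw [ENNReal.ofReal_of_nonpos (sub_nonpos.2 h), ENNReal.zero_rpow_of_pos hp, add_zero,
      abs_sub_comm, abs_of_nonneg (sub_nonneg.2 h),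
      ENNReal.ofReal_rpow_of_nonneg (sub_nonneg.2 h) hp.le]
  · rw [ENNReal.ofReal_of_nonpos (sub_nonpos.2 h), ENNReal.zero_rpow_of_pos hp, zero_add,
      abs_of_nonneg (sub_nonneg.2 h), ENNReal.ofReal_rpow_of_nonneg (sub_nonneg.2 h) hp.le]

lemma lintegral_ite_le_lt (a b : ℝ) :
    ∫⁻ s : ℝ, (if a ≤ s ∧ s < b then 1 else 0) = ENNReal.ofReal (b - a) := by
  rw [← Real.volume_Ico, ← lintegral_indicator_one measurableSet_Ico]
  simp only [indicator_apply, mem_Ico, Pi.one_apply]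

/-- `p (p - 1) u ^ (p - 2)` is the second derivative of `u ↦ u ^ p`, so integrating it over
`a ≤ s < t < b` gives `(b - a) ^ p`. -/
noncomputable def rpowKernel (p : ℝ) (x : ℝ × ℝ) : ℝ≥0∞ :=
  if x.1 < x.2 then ENNReal.ofReal (p * (p - 1) * (x.2 - x.1) ^ (p - 2)) else 0

lemma measurable_rpowKernel (p : ℝ) : Measurable (rpowKernel p) :=
  Measurable.ite (measurableSet_lt measurable_fst measurable_snd) (by fun_prop) measurable_const

lemma lintegral_rpowKernel_mul_ite {p : ℝ} (hp : 1 < p) (a b : ℝ) :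
    ∫⁻ x, rpowKernel p x * (if a ≤ x.1 ∧ x.2 < b then 1 else 0) = ENNReal.ofReal (b - a) ^ p := by
  have hinner (s : ℝ) : ∫⁻ t, rpowKernel p (s, t) * (if a ≤ s ∧ t < b then 1 else 0)
      = (Ico a b).indicator (fun s => ENNReal.ofReal p * ENNReal.ofReal (b - s) ^ (p - 1)) s := by
    by_cases has : a ≤ s
    · have hpt (t : ℝ) : rpowKernel p (s, t) * (if a ≤ s ∧ t < b then 1 else 0)
          = (Ioo s b).indicator
            (fun t => ENNReal.ofReal p * ENNReal.ofReal ((p - 1) * (t - s) ^ (p - 1 - 1))) t := by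
        by_cases hst : s < t <;> by_cases htb : t < b <;>
          simp [rpowKernel, indicator, has, hst, htb, ← ENNReal.ofReal_mul (by linarith : 0 ≤ p),
            mul_assoc, show p - 1 - 1 = p - 2 by ring]
      rw [lintegral_congr hpt, lintegral_indicator measurableSet_Ioo,
        lintegral_const_mul' _ _ ENNReal.ofReal_ne_top,
        setLIntegral_Ioo_rpow_sub_left (sub_pos.2 hp)]
      by_cases hsb : s < b
      · rw [indicator_of_mem (show s ∈ Ico a b from ⟨has, hsb⟩)]
      · rw [indicator_of_notMem fun h => hsb h.2,
          ENNReal.ofReal_of_nonpos (show b - s ≤ 0 by linarith),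
          ENNReal.zero_rpow_of_pos (by linarith), mul_zero]
    · simp [has]
  rw [Measure.volume_eq_prod,
    lintegral_prod _ ((measurable_rpowKernel p).fun_mul (measurable_ite_le_lt a b)).aemeasurable]
  simp only [hinner]
  rw [lintegral_indicator measurableSet_Ico, ← setLIntegral_congr Ioo_ae_eq_Ico,
    ← setLIntegral_Ioo_rpow_sub_right (by linarith : 0 < p)]
  refine setLIntegral_congr_fun measurableSet_Ioo fun s hs => ?_
  rw [ENNReal.ofReal_rpow_of_nonneg (sub_pos.2 hs.2).le (by linarith),
    ← ENNReal.ofReal_mul (by linarith)]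

lemma exists_lintegral_straddle_eq {p : ℝ} (hp : 1 ≤ p) :
    ∃ ρ : Measure (ℝ × ℝ), SFinite ρ ∧
      ∀ a b : ℝ, ENNReal.ofReal (|a - b| ^ p) = ∫⁻ x, straddle a b x.1 x.2 ∂ρ := by
  rcases hp.eq_or_lt with rfl | hp
  · refine ⟨volume.map fun s => (s, s), inferInstance, fun a b => ?_⟩
    have hdiag : Measurable fun s : ℝ => (s, s) := measurable_id.prodMk measurable_id
    rw [lintegral_map (measurable_straddle a b) hdiag]
    simp only [straddle]
    rw [lintegral_add_left (f := fun s => if a ≤ s ∧ s < b then 1 else 0)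
        ((measurable_ite_le_lt a b).comp hdiag), lintegral_ite_le_lt,
      lintegral_ite_le_lt, ofReal_abs_sub_rpow one_pos, ENNReal.rpow_one, ENNReal.rpow_one]
  · refine ⟨volume.withDensity (rpowKernel p), inferInstance, fun a b => ?_⟩
    rw [lintegral_withDensity_eq_lintegral_mul _ (measurable_rpowKernel p)
      (measurable_straddle a b)]
    simp only [Pi.mul_apply, straddle, mul_add]
    rw [lintegral_add_left ((measurable_rpowKernel p).fun_mul (measurable_ite_le_lt a b)),
      lintegral_rpowKernel_mul_ite hp, lintegral_rpowKernel_mul_ite hp,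
      ofReal_abs_sub_rpow (by linarith)]

end Straddle

section Transfer

noncomputable def straddleProb (μ ν : Measure ℝ) (s t : ℝ) : ℝ≥0∞ :=
  (μ (Iic s) - ν (Iic t)) + (ν (Iic s) - μ (Iic t))

noncomputable def cdfStraddle (μ ν : Measure ℝ) (ω s t : ℝ) : ℝ≥0∞ :=
  (if ENNReal.ofReal ω ≤ μ (Iic s) ∧ ν (Iic t) < ENNReal.ofReal ω then 1 else 0) +
    (if ENNReal.ofReal ω ≤ ν (Iic s) ∧ μ (Iic t) < ENNReal.ofReal ω then 1 else 0)

lemma measurable_measure_Iic (μ : Measure ℝ) : Measurable fun s => μ (Iic s) :=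
  Monotone.measurable fun _ _ h => measure_mono (Iic_subset_Iic.2 h)

lemma measurable_straddleProb (μ ν : Measure ℝ) :
    Measurable fun x : ℝ × ℝ => straddleProb μ ν x.1 x.2 := by
  have hF (κ : Measure ℝ) (f : ℝ × ℝ → ℝ) (hf : Measurable f) : Measurable fun x => κ (Iic (f x)) :=
    (measurable_measure_Iic κ).comp hf
  exact ((hF μ _ measurable_fst).sub (hF ν _ measurable_snd)).add
    ((hF ν _ measurable_fst).sub (hF μ _ measurable_snd))

lemma measurable_cdfStraddle (μ ν : Measure ℝ) :
    Measurable fun v : ℝ × ℝ × ℝ => cdfStraddle μ ν v.1 v.2.1 v.2.2 := by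
  have hω : Measurable fun v : ℝ × ℝ × ℝ => ENNReal.ofReal v.1 :=
    ENNReal.measurable_ofReal.comp measurable_fst
  have hterm (κ κ' : Measure ℝ) : Measurable fun v : ℝ × ℝ × ℝ =>
      if ENNReal.ofReal v.1 ≤ κ (Iic v.2.1) ∧ κ' (Iic v.2.2) < ENNReal.ofReal v.1
      then (1 : ℝ≥0∞) else 0 :=
    Measurable.ite ((measurableSet_le hω ((measurable_measure_Iic κ).comp measurable_snd.fst)).inter
      (measurableSet_lt ((measurable_measure_Iic κ').comp measurable_snd.snd) hω))
      measurable_const measurable_const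
  exact (hterm μ ν).fun_add (hterm ν μ)

lemma setLIntegral_ite_ofReal_le_lt {m n : ℝ≥0∞} (hm : m ≤ 1) (hn : n ≠ ∞) :
    ∫⁻ ω in Ioo (0 : ℝ) 1, (if ENNReal.ofReal ω ≤ m ∧ n < ENNReal.ofReal ω then 1 else 0)
      = m - n := by
  have hm' : m ≠ ∞ := ne_top_of_le_ne_top ENNReal.one_ne_top hm
  have hpt (ω : ℝ) : (if ENNReal.ofReal ω ≤ m ∧ n < ENNReal.ofReal ω then (1 : ℝ≥0∞) else 0)
      = (Ioc n.toReal m.toReal).indicator 1 ω := by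
    simp only [ENNReal.ofReal_le_iff_le_toReal hm', ENNReal.lt_ofReal_iff_toReal_lt hn,
      indicator_apply, mem_Ioc, Pi.one_apply, and_comm]
  have hsub : Ioc n.toReal m.toReal ⊆ Ioc 0 1 :=
    Ioc_subset_Ioc ENNReal.toReal_nonneg
      (ENNReal.toReal_le_of_le_ofReal zero_le_one (by simpa using hm))
  simp_rw [hpt]
  rw [Measure.restrict_congr_set Ioo_ae_eq_Ioc, lintegral_indicator_one measurableSet_Ioc,
    Measure.restrict_apply measurableSet_Ioc, inter_eq_left.2 hsub, Real.volume_Ioc,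
    ENNReal.ofReal_sub _ ENNReal.toReal_nonneg, ENNReal.ofReal_toReal hm',
    ENNReal.ofReal_toReal hn]

variable (μ ν : Measure ℝ) [IsProbabilityMeasure μ] [IsProbabilityMeasure ν]

lemma straddle_quantileFn {ω : ℝ} (hω : ω ∈ Ioo (0 : ℝ) 1) (s t : ℝ) :
    straddle (quantileFn μ ω) (quantileFn ν ω) s t = cdfStraddle μ ν ω s t := by
  simp only [straddle, cdfStraddle, quantileFn_le_iff _ hω.1 hω.2, lt_quantileFn_iff _ hω.1 hω.2]

lemma setLIntegral_cdfStraddle (s t : ℝ) :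
    ∫⁻ ω in Ioo (0 : ℝ) 1, cdfStraddle μ ν ω s t = straddleProb μ ν s t := by
  have hmeas : Measurable fun ω : ℝ =>
      if ENNReal.ofReal ω ≤ μ (Iic s) ∧ ν (Iic t) < ENNReal.ofReal ω then (1 : ℝ≥0∞) else 0 :=
    Measurable.ite ((measurableSet_le ENNReal.measurable_ofReal measurable_const).inter
      (measurableSet_lt measurable_const ENNReal.measurable_ofReal)) measurable_const
      measurable_const
  simp only [cdfStraddle]
  rw [lintegral_add_left hmeas,
    setLIntegral_ite_ofReal_le_lt prob_le_one (measure_ne_top _ _),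
    setLIntegral_ite_ofReal_le_lt prob_le_one (measure_ne_top _ _), straddleProb]

lemma setLIntegral_quantileFn_eq_lintegral_straddleProb {ρ : Measure (ℝ × ℝ)} [SFinite ρ]
    {f : ℝ → ℝ → ℝ≥0∞} (hf : ∀ a b, f a b = ∫⁻ x, straddle a b x.1 x.2 ∂ρ) :
    ∫⁻ ω in Ioo (0 : ℝ) 1, f (quantileFn μ ω) (quantileFn ν ω)
      = ∫⁻ x, straddleProb μ ν x.1 x.2 ∂ρ :=
  calc ∫⁻ ω in Ioo (0 : ℝ) 1, f (quantileFn μ ω) (quantileFn ν ω)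
      = ∫⁻ ω in Ioo (0 : ℝ) 1, ∫⁻ x, cdfStraddle μ ν ω x.1 x.2 ∂ρ :=
        setLIntegral_congr_fun measurableSet_Ioo fun ω hω => by
          simp only [hf, straddle_quantileFn μ ν hω]
    _ = ∫⁻ x, (∫⁻ ω in Ioo (0 : ℝ) 1, cdfStraddle μ ν ω x.1 x.2) ∂ρ :=
        lintegral_lintegral_swap (measurable_cdfStraddle μ ν).aemeasurable
    _ = ∫⁻ x, straddleProb μ ν x.1 x.2 ∂ρ := by simp only [setLIntegral_cdfStraddle]

end Transfer

section Mixture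

variable {ι : Type*}

lemma tsum_tsub_le_tsum_tsub (f g : ι → ℝ≥0∞) :
    ∑' i, f i - ∑' i, g i ≤ ∑' i, (f i - g i) := by
  rw [tsub_le_iff_right, ← ENNReal.tsum_add]
  exact ENNReal.tsum_le_tsum fun i => le_tsub_add

variable (w : ι → ℝ≥0∞)

lemma isProbabilityMeasure_sum_smul (hw : ∑' i, w i = 1) {μs : ι → Measure ℝ}
    (hμ : ∀ i, IsProbabilityMeasure (μs i)) :
    IsProbabilityMeasure (Measure.sum fun i => w i • μs i) :=
  ⟨by simp [Measure.sum_apply _ MeasurableSet.univ, hw]⟩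

lemma straddleProb_sum_smul_le (μs νs : ι → Measure ℝ) (s t : ℝ) :
    straddleProb (Measure.sum fun i => w i • μs i) (Measure.sum fun i => w i • νs i) s t
      ≤ ∑' i, w i * straddleProb (μs i) (νs i) s t := by
  simp only [straddleProb, Measure.sum_apply _ measurableSet_Iic, Measure.smul_apply, smul_eq_mul]
  calc _ ≤ ∑' i, (w i * μs i (Iic s) - w i * νs i (Iic t))
        + ∑' i, (w i * νs i (Iic s) - w i * μs i (Iic t)) :=
        add_le_add (tsum_tsub_le_tsum_tsub _ _) (tsum_tsub_le_tsum_tsub _ _)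
    _ = ∑' i, ((w i * μs i (Iic s) - w i * νs i (Iic t))
        + (w i * νs i (Iic s) - w i * μs i (Iic t))) := ENNReal.tsum_add.symm
    _ ≤ _ := ENNReal.tsum_le_tsum fun i => by rw [mul_add]; exact add_le_add le_mul_tsub le_mul_tsub

lemma lintegral_straddleProb_sum_smul_le [Countable ι] (ρ : Measure (ℝ × ℝ))
    (μs νs : ι → Measure ℝ) :
    ∫⁻ x, straddleProb (Measure.sum fun i => w i • μs i) (Measure.sum fun i => w i • νs i)
        x.1 x.2 ∂ρ
      ≤ ∑' i, w i * ∫⁻ x, straddleProb (μs i) (νs i) x.1 x.2 ∂ρ :=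
  calc _ ≤ ∫⁻ x, ∑' i, w i * straddleProb (μs i) (νs i) x.1 x.2 ∂ρ :=
        lintegral_mono fun x => straddleProb_sum_smul_le w μs νs x.1 x.2
    _ = ∑' i, ∫⁻ x, w i * straddleProb (μs i) (νs i) x.1 x.2 ∂ρ :=
        lintegral_tsum fun i => ((measurable_straddleProb _ _).const_mul _).aemeasurable
    _ = _ := by simp only [lintegral_const_mul _ (measurable_straddleProb _ _)]

lemma setLIntegral_rpow_quantileFn_sum_smul_le [Countable ι] {p : ℝ} (hp : 1 ≤ p)
    (hw : ∑' i, w i = 1) (μs νs : ι → Measure ℝ) (hμ : ∀ i, IsProbabilityMeasure (μs i))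
    (hν : ∀ i, IsProbabilityMeasure (νs i)) :
    ∫⁻ ω in Ioo (0 : ℝ) 1, ENNReal.ofReal (|quantileFn (Measure.sum fun i => w i • μs i) ω
        - quantileFn (Measure.sum fun i => w i • νs i) ω| ^ p)
      ≤ ∑' i, w i * ∫⁻ ω in Ioo (0 : ℝ) 1,
          ENNReal.ofReal (|quantileFn (μs i) ω - quantileFn (νs i) ω| ^ p) := by
  obtain ⟨ρ, _, hρ⟩ := exists_lintegral_straddle_eq hp
  have := isProbabilityMeasure_sum_smul w hw hμ
  have := isProbabilityMeasure_sum_smul w hw hν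
  simp only [setLIntegral_quantileFn_eq_lintegral_straddleProb _ _ hρ]
  exact lintegral_straddleProb_sum_smul_le w ρ μs νs

end Mixture

section Wasserstein

lemma WpE_rpow {p : ℝ} (hp : p ≠ 0) (μ ν : Measure ℝ) :
    WpE p μ ν ^ p = ∫⁻ ω in Ioo (0 : ℝ) 1,
      ENNReal.ofReal (|quantileFn μ ω - quantileFn ν ω| ^ p) := by
  rw [WpE, one_div, ENNReal.rpow_inv_rpow hp]

lemma WpE_sum_smul_le {ι : Type*} [Countable ι] {w : ι → ℝ≥0∞} {p : ℝ} (hp : 1 ≤ p)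
    (hw : ∑' i, w i = 1) {μs νs : ι → Measure ℝ} (hμ : ∀ i, IsProbabilityMeasure (μs i))
    (hν : ∀ i, IsProbabilityMeasure (νs i)) {d : ℝ≥0∞} (hd : ∀ i, WpE p (μs i) (νs i) ≤ d) :
    WpE p (Measure.sum fun i => w i • μs i) (Measure.sum fun i => w i • νs i) ≤ d := by
  have hp0 : 0 < p := by linarith
  rw [← ENNReal.rpow_le_rpow_iff hp0, WpE_rpow hp0.ne']
  calc _ ≤ ∑' i, w i * WpE p (μs i) (νs i) ^ p := by
        simpa only [WpE_rpow hp0.ne'] using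
          setLIntegral_rpow_quantileFn_sum_smul_le w hp hw μs νs hμ hν
    _ ≤ ∑' i, w i * d ^ p :=
        ENNReal.tsum_le_tsum fun i => mul_le_mul_right (ENNReal.rpow_le_rpow (hd i) hp0.le) _
    _ = d ^ p := by rw [ENNReal.tsum_mul_right, hw, one_mul]

lemma WpE_map_affine (c : ℝ) {γ p : ℝ} (hγ : 0 ≤ γ) (hp : 0 < p) (μ ν : Measure ℝ)
    [IsProbabilityMeasure μ] [IsProbabilityMeasure ν] :
    WpE p (μ.map fun z => c + γ * z) (ν.map fun z => c + γ * z) = ENNReal.ofReal γ * WpE p μ ν := by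
  have hmono : Monotone fun z : ℝ => c + γ * z := fun x y h => by dsimp only; gcongr
  have hcont : Continuous fun z : ℝ => c + γ * z := by fun_prop
  have hpt : ∀ ω ∈ Ioo (0 : ℝ) 1,
      ENNReal.ofReal (|quantileFn (μ.map fun z => c + γ * z) ω
        - quantileFn (ν.map fun z => c + γ * z) ω| ^ p)
      = ENNReal.ofReal γ ^ p * ENNReal.ofReal (|quantileFn μ ω - quantileFn ν ω| ^ p) := by
    intro ω hω
    rw [quantileFn_map μ hmono hcont hω.1 hω.2, quantileFn_map ν hmono hcont hω.1 hω.2,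
      add_sub_add_left_eq_sub, ← mul_sub, abs_mul, abs_of_nonneg hγ,
      Real.mul_rpow hγ (abs_nonneg _), ENNReal.ofReal_mul (Real.rpow_nonneg hγ _),
      ENNReal.ofReal_rpow_of_nonneg hγ hp.le]
  rw [WpE, WpE, setLIntegral_congr_fun measurableSet_Ioo hpt,
    lintegral_const_mul' _ _ (ENNReal.rpow_ne_top_of_nonneg hp.le ENNReal.ofReal_ne_top),
    ENNReal.mul_rpow_of_nonneg _ _ (by positivity), ← ENNReal.rpow_mul, mul_one_div_cancel hp.ne',
    ENNReal.rpow_one]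

end Wasserstein

section Bellman

lemma tsum_ofReal_eq_one {ι : Type*} {f : ι → ℝ} (h0 : ∀ i, 0 ≤ f i) (h : ∑' i, f i = 1) :
    ∑' i, ENNReal.ofReal (f i) = 1 := by
  have hs : Summable f := by
    by_contra hs
    rw [tsum_eq_zero_of_not_summable hs] at h
    exact zero_ne_one h
  rw [← ENNReal.ofReal_tsum_of_nonneg h0 hs, h, ENNReal.ofReal_one]

lemma tsum_prod_ofReal_mul_eq_one {X A : Type*} {u : X → ℝ} {v : X → A → ℝ}
    (hu0 : ∀ x, 0 ≤ u x) (hu : ∑' x, u x = 1) (hv0 : ∀ x a, 0 ≤ v x a)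
    (hv : ∀ x, ∑' a, v x a = 1) :
    ∑' i : X × A, ENNReal.ofReal (u i.1 * v i.1 i.2) = 1 := by
  rw [ENNReal.tsum_prod', ← tsum_ofReal_eq_one hu0 hu]
  refine tsum_congr fun x => ?_
  simp_rw [ENNReal.ofReal_mul (hu0 x)]
  rw [ENNReal.tsum_mul_left, tsum_ofReal_eq_one (hv0 x) (hv x), mul_one]

lemma distBellman_apply {X A : Type*} [Countable X] [Countable A] (P : X → A → X → ℝ)
    (π : X → A → ℝ) (r : X → A → ℝ) (γ : ℝ) (Z : X × A → Measure ℝ) (q : X × A) :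
    distBellman P π r γ Z q = Measure.sum fun i : X × A =>
      ENNReal.ofReal (P q.1 q.2 i.1 * π i.1 i.2) • (Z i).map fun z => r q.1 q.2 + γ * z :=
  Measure.sum_sum _

end Bellman

theorem distBellman_contraction_general
    {X A : Type*} [Countable X] [Countable A]
    (P : X → A → X → ℝ) (hP01 : ∀ x a x', P x a x' ∈ Set.Icc (0:ℝ) 1)
    (hP : ∀ x a, ∑' x', P x a x' = 1)
    (π : X → A → ℝ) (hπ01 : ∀ x' a', π x' a' ∈ Set.Icc (0:ℝ) 1)
    (hπ : ∀ x', ∑' a', π x' a' = 1)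
    (r : X → A → ℝ) (γ : ℝ) (hγ : γ ∈ Set.Ico (0:ℝ) 1)
    (p : ℝ) (hp : 1 ≤ p)
    (Z₁ Z₂ : X × A → Measure ℝ)
    (hZ₁ : ∀ q, IsProbabilityMeasure (Z₁ q)) (hZ₂ : ∀ q, IsProbabilityMeasure (Z₂ q)) :
    (⨆ q : X × A, WpE p (distBellman P π r γ Z₁ q) (distBellman P π r γ Z₂ q))
      ≤ ENNReal.ofReal γ * ⨆ q : X × A, WpE p (Z₁ q) (Z₂ q) := by
  refine iSup_le fun q => ?_
  have hw : ∑' i : X × A, ENNReal.ofReal (P q.1 q.2 i.1 * π i.1 i.2) = 1 :=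
    tsum_prod_ofReal_mul_eq_one (fun x' => (hP01 _ _ x').1) (hP _ _)
      (fun x' a' => (hπ01 x' a').1) hπ
  have hf : Measurable fun z : ℝ => r q.1 q.2 + γ * z := by fun_prop
  rw [distBellman_apply, distBellman_apply]
  refine WpE_sum_smul_le hp hw (fun i => Measure.isProbabilityMeasure_map hf.aemeasurable)
    (fun i => Measure.isProbabilityMeasure_map hf.aemeasurable) fun i => ?_
  rw [WpE_map_affine _ hγ.1 (by linarith)]
  exact mul_le_mul_right (le_iSup (fun q => WpE p (Z₁ q) (Z₂ q)) i) _

/-- the distributional Bellman operator `T^π` is a `γ`-contraction in the maximal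
p-Wasserstein metric `d̄_p(Z₁, Z₂) = sup_{x,a} W_p(Z₁(x,a), Z₂(x,a))`. -/
theorem distBellman_contraction
    {X A : Type*} [Countable X] [Countable A] [Nonempty X] [Nonempty A]
    (P : X → A → X → ℝ) (hP01 : ∀ x a x', P x a x' ∈ Set.Icc (0:ℝ) 1)
    (hP : ∀ x a, ∑' x', P x a x' = 1)
    (π : X → A → ℝ) (hπ01 : ∀ x' a', π x' a' ∈ Set.Icc (0:ℝ) 1)
    (hπ : ∀ x', ∑' a', π x' a' = 1)
    (r : X → A → ℝ) (γ : ℝ) (hγ : γ ∈ Set.Ico (0:ℝ) 1)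
    (p : ℝ) (hp : 1 ≤ p)
    (Z₁ Z₂ : X × A → Measure ℝ)
    (hZ₁ : ∀ q, IsProbabilityMeasure (Z₁ q)) (hZ₂ : ∀ q, IsProbabilityMeasure (Z₂ q))
    (hm₁ : ∀ q, Integrable (fun z : ℝ => |z| ^ p) (Z₁ q))
    (hm₂ : ∀ q, Integrable (fun z : ℝ => |z| ^ p) (Z₂ q)) :
    (⨆ q : X × A, WpE p (distBellman P π r γ Z₁ q) (distBellman P π r γ Z₂ q))
      ≤ ENNReal.ofReal γ * ⨆ q : X × A, WpE p (Z₁ q) (Z₂ q) :=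
  distBellman_contraction_general P hP01 hP π hπ01 hπ r γ hγ p hp Z₁ Z₂ hZ₁ hZ₂
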